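/- arXiv:1309.0891 — 2 statements merged into one kernel-verified Lean document; each statement's English description precedes it below -/
import Mathlib

section
/- Let T be a commutative monad on Set and (B, β) a T-algebra. Any f : X × Y → B extends uniquely along η_X × η_Y to a bilinear map f̃ : TX × TY → B, given explicitly by f̃ = β ∘ T(f) ∘ dst_{X,Y}. -/
universe u

open CategoryTheory

/-- A commutative (strong) monad on `Set`: a monad with a strength satisfying the standard
coherence laws, whose double strength (definable in two ways from the strength and the
swapped strength) is unambiguous. -/
structure CommMonadData : Type (u + 1) where
  T : Monad (Type u)
  st : ∀ (X Y : Type u), X × T.obj Y → T.obj (X × Y)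
  st_natural : ∀ {X X' Y Y' : Type u} (f : X → X') (g : Y → Y'),
    T.map (TypeCat.ofHom (Prod.map f g)) ∘ st X Y = st X' Y' ∘ Prod.map f (T.map (TypeCat.ofHom g))
  st_unit : ∀ (X Y : Type u),
    st X Y ∘ Prod.map (id : X → X) (T.η.app Y) = T.η.app (X × Y)
  st_mult : ∀ (X Y : Type u),
    st X Y ∘ Prod.map (id : X → X) (T.μ.app Y)
      = T.μ.app (X × Y) ∘ T.map (TypeCat.ofHom (st X Y)) ∘ st X (T.obj Y)
  st_proj : ∀ (Y : Type u), T.map (TypeCat.ofHom Prod.snd) ∘ st PUnit Y = Prod.snd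
  st' : ∀ (X Y : Type u), T.obj X × Y → T.obj (X × Y)
  st'_def : ∀ (X Y : Type u) (p : T.obj X × Y),
    st' X Y p = T.map (TypeCat.ofHom Prod.swap) (st Y X (p.2, p.1))
  dst : ∀ (X Y : Type u), T.obj X × T.obj Y → T.obj (X × Y)
  dst_def : ∀ (X Y : Type u) (p : T.obj X × T.obj Y),
    dst X Y p = T.μ.app (X × Y) (T.map (TypeCat.ofHom (st' X Y)) (st (T.obj X) Y p))
  comm : ∀ (X Y : Type u) (p : T.obj X × T.obj Y),
    dst X Y p = T.μ.app (X × Y) (T.map (TypeCat.ofHom (st X Y)) (st' X (T.obj Y) p))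

/-- The free algebra `(T X, μ_X)` on `X`. -/
def CommMonadData.free (M : CommMonadData.{u}) (X : Type u) : Monad.Algebra M.T :=
  (Monad.free M.T).obj X

/-- Linearity of `g : T X × T Y → B` in the first argument. -/
def CommMonadData.Linear₁ (M : CommMonadData.{u}) {X Y : Type u} (B : Monad.Algebra M.T)
    (g : M.T.obj X × M.T.obj Y → B.A) : Prop :=
  ∀ p : M.T.obj (M.T.obj X) × M.T.obj Y,
    g (M.T.μ.app X p.1, p.2) = B.a (M.T.map (TypeCat.ofHom g) (M.st' (M.T.obj X) (M.T.obj Y) p))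

/-- Linearity of `g : T X × T Y → B` in the second argument. -/
def CommMonadData.Linear₂ (M : CommMonadData.{u}) {X Y : Type u} (B : Monad.Algebra M.T)
    (g : M.T.obj X × M.T.obj Y → B.A) : Prop :=
  ∀ p : M.T.obj X × M.T.obj (M.T.obj Y),
    g (p.1, M.T.μ.app Y p.2) = B.a (M.T.map (TypeCat.ofHom g) (M.st (M.T.obj X) (M.T.obj Y) p))

/-!
Both strengths are unital and multiplicative, and commutativity lets `dst` be unfolded through
either of them; hence `dst` sends `η × η` to `η` and turns a multiplication in either argument
into a multiplication after the corresponding strength, which makes `β ∘ T f ∘ dst` a bilinear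
extension of `f`. Conversely, writing `a = μ (T η a)` and using linearity in the first argument,
a bilinear `g` is determined on `T X × T Y` by its values on `η X × T Y`, and by linearity in the
second argument these are determined by the values on `η X × η Y`.
-/

namespace CategoryTheory.Monad

variable (T : Monad (Type u))

lemma map_ofHom_map_ofHom {X Y Z : Type u} (f : X → Y) (g : Y → Z) (t : T.obj X) :
    T.map (↾g) (T.map (↾f) t) = T.map (↾fun x => g (f x)) t :=
  (T.map_comp_apply (↾f) (↾g) t).symm

lemma map_η_apply {X Y : Type u} (f : X → Y) (x : X) :
    T.map (↾f) (T.η.app X x) = T.η.app Y (f x) :=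
  (NatTrans.naturality_apply T.η (↾f) x).symm

lemma map_μ_apply {X Y : Type u} (f : X → Y) (t : T.obj (T.obj X)) :
    T.map (↾f) (T.μ.app X t) = T.μ.app Y (T.map (↾T.map (↾f)) t) :=
  (NatTrans.naturality_apply T.μ (↾f) t).symm

lemma μ_η_apply {X : Type u} (t : T.obj X) : T.μ.app X (T.η.app (T.obj X) t) = t :=
  types_congr_hom (T.left_unit X) t

lemma μ_map_η_apply {X : Type u} (t : T.obj X) : T.μ.app X (T.map (↾T.η.app X) t) = t :=
  types_congr_hom (T.right_unit X) t

lemma μ_map_μ_apply {X : Type u} (t : T.obj (T.obj (T.obj X))) :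
    T.μ.app X (T.map (↾T.μ.app X) t) = T.μ.app X (T.μ.app (T.obj X) t) :=
  types_congr_hom (T.assoc X) t

variable {T}

lemma Algebra.a_η_apply (B : Algebra T) (x : B.A) : B.a (T.η.app B.A x) = x :=
  types_congr_hom B.unit x

lemma Algebra.a_μ_apply (B : Algebra T) (t : T.obj (T.obj B.A)) :
    B.a (T.μ.app B.A t) = B.a (T.map (↾B.a) t) :=
  types_congr_hom B.assoc t

end CategoryTheory.Monad

namespace CommMonadData

open Monad

variable (M : CommMonadData.{u})

lemma map_st {X X' Y Y' : Type u} (f : X → X') (g : Y → Y') (x : X) (t : M.T.obj Y) :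
    M.T.map (↾Prod.map f g) (M.st X Y (x, t)) = M.st X' Y' (f x, M.T.map (↾g) t) :=
  congrFun (M.st_natural f g) (x, t)

lemma st_η {X Y : Type u} (x : X) (y : Y) :
    M.st X Y (x, M.T.η.app Y y) = M.T.η.app (X × Y) (x, y) :=
  congrFun (M.st_unit X Y) (x, y)

lemma st_μ {X Y : Type u} (x : X) (t : M.T.obj (M.T.obj Y)) :
    M.st X Y (x, M.T.μ.app Y t)
      = M.T.μ.app (X × Y) (M.T.map (↾M.st X Y) (M.st X (M.T.obj Y) (x, t))) :=
  congrFun (M.st_mult X Y) (x, t)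

lemma map_st' {X X' Y Y' : Type u} (f : X → X') (g : Y → Y') (t : M.T.obj X) (y : Y) :
    M.T.map (↾Prod.map f g) (M.st' X Y (t, y)) = M.st' X' Y' (M.T.map (↾f) t, g y) := by
  rw [M.st'_def, M.st'_def, map_ofHom_map_ofHom, ← M.map_st g f, map_ofHom_map_ofHom]

lemma st'_η {X Y : Type u} (x : X) (y : Y) :
    M.st' X Y (M.T.η.app X x, y) = M.T.η.app (X × Y) (x, y) := by
  rw [M.st'_def, M.st_η, map_η_apply]
  rfl

lemma st'_μ {X Y : Type u} (t : M.T.obj (M.T.obj X)) (y : Y) :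
    M.st' X Y (M.T.μ.app X t, y)
      = M.T.μ.app (X × Y) (M.T.map (↾M.st' X Y) (M.st' (M.T.obj X) Y (t, y))) := by
  rw [M.st'_def, M.st'_def, M.st_μ, map_μ_apply, map_ofHom_map_ofHom, map_ofHom_map_ofHom]
  simp only [M.st'_def, Prod.fst_swap, Prod.snd_swap, Prod.mk.eta]

lemma dst_η_η {X Y : Type u} (x : X) (y : Y) :
    M.dst X Y (M.T.η.app X x, M.T.η.app Y y) = M.T.η.app (X × Y) (x, y) := by
  rw [M.dst_def, M.st_η, map_η_apply, M.st'_η, μ_η_apply]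

lemma dst_μ_left {X Y : Type u} (t : M.T.obj (M.T.obj X)) (b : M.T.obj Y) :
    M.dst X Y (M.T.μ.app X t, b)
      = M.T.μ.app (X × Y) (M.T.map (↾M.dst X Y) (M.st' (M.T.obj X) (M.T.obj Y) (t, b))) := by
  rw [M.comm, M.st'_μ, map_μ_apply, ← μ_map_μ_apply, map_ofHom_map_ofHom, map_ofHom_map_ofHom]
  simp only [← M.comm]

lemma dst_μ_right {X Y : Type u} (a : M.T.obj X) (t : M.T.obj (M.T.obj Y)) :
    M.dst X Y (a, M.T.μ.app Y t)
      = M.T.μ.app (X × Y) (M.T.map (↾M.dst X Y) (M.st (M.T.obj X) (M.T.obj Y) (a, t))) := by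
  rw [M.dst_def, M.st_μ, map_μ_apply, ← μ_map_μ_apply, map_ofHom_map_ofHom, map_ofHom_map_ofHom]
  simp only [← M.dst_def]

variable {M} {B : Monad.Algebra M.T} {X Y : Type u}

lemma Linear₁.apply_eq_a_map_st' {g : M.T.obj X × M.T.obj Y → B.A} (hg : M.Linear₁ B g)
    (a : M.T.obj X) (b : M.T.obj Y) :
    g (a, b) = B.a (M.T.map (↾fun q => g (M.T.η.app X q.1, q.2)) (M.st' X (M.T.obj Y) (a, b))) := by
  conv_lhs => rw [← μ_map_η_apply M.T a]
  rw [hg (M.T.map (↾M.T.η.app X) a, b)]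
  have hst : M.st' (M.T.obj X) (M.T.obj Y) (M.T.map (↾M.T.η.app X) a, b)
      = M.T.map (↾Prod.map (M.T.η.app X) id) (M.st' X (M.T.obj Y) (a, b)) :=
    (M.map_st' (M.T.η.app X) id a b).symm
  rw [hst, map_ofHom_map_ofHom]

lemma Linear₂.apply_η_left_eq {g : M.T.obj X × M.T.obj Y → B.A} (hg : M.Linear₂ B g)
    (x : X) (t : M.T.obj Y) :
    g (M.T.η.app X x, t)
      = B.a (M.T.map (↾fun q => g (M.T.η.app X q.1, M.T.η.app Y q.2)) (M.st X Y (x, t))) := by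
  conv_lhs => rw [← μ_map_η_apply M.T t]
  rw [hg (M.T.η.app X x, M.T.map (↾M.T.η.app Y) t), ← M.map_st, map_ofHom_map_ofHom]
  rfl

theorem bilinear_ext {g h : M.T.obj X × M.T.obj Y → B.A}
    (hg₁ : M.Linear₁ B g) (hg₂ : M.Linear₂ B g) (hh₁ : M.Linear₁ B h) (hh₂ : M.Linear₂ B h)
    (hgh : ∀ x y, g (M.T.η.app X x, M.T.η.app Y y) = h (M.T.η.app X x, M.T.η.app Y y)) :
    g = h := by
  have hη : ∀ x t, g (M.T.η.app X x, t) = h (M.T.η.app X x, t) := fun x t => by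
    rw [hg₂.apply_η_left_eq, hh₂.apply_η_left_eq]
    simp only [hgh]
  funext ⟨a, b⟩
  rw [hg₁.apply_eq_a_map_st', hh₁.apply_eq_a_map_st']
  simp only [hη]

variable (M B)

def bilinearExtension (f : X × Y → B.A) : M.T.obj X × M.T.obj Y → B.A :=
  fun q => B.a (M.T.map (↾f) (M.dst X Y q))

variable (f : X × Y → B.A)

lemma bilinearExtension_η_η (x : X) (y : Y) :
    M.bilinearExtension B f (M.T.η.app X x, M.T.η.app Y y) = f (x, y) := by
  rw [bilinearExtension, dst_η_η, map_η_apply, Algebra.a_η_apply]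

lemma linear₁_bilinearExtension : M.Linear₁ B (M.bilinearExtension B f) := by
  rintro ⟨t, b⟩
  rw [bilinearExtension, dst_μ_left, map_μ_apply, Algebra.a_μ_apply, map_ofHom_map_ofHom,
    map_ofHom_map_ofHom]
  rfl

lemma linear₂_bilinearExtension : M.Linear₂ B (M.bilinearExtension B f) := by
  rintro ⟨a, t⟩
  rw [bilinearExtension, dst_μ_right, map_μ_apply, Algebra.a_μ_apply, map_ofHom_map_ofHom,
    map_ofHom_map_ofHom]
  rfl

end CommMonadData

/-- for a commutative monad `T` on `Set` and a `T`-algebra `(B, β)`, every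
`f : X × Y → B` extends uniquely along `η_X × η_Y` to a bilinear map `f̃ : T X × T Y → B`,
given explicitly by `f̃ = β ∘ T f ∘ dst`. -/
theorem comm_monad_bilinear_extension (M : CommMonadData.{u})
    (B : Monad.Algebra M.T) (X Y : Type u) (f : X × Y → B.A) :
    ((∀ p : X × Y, B.a (M.T.map (TypeCat.ofHom f) (M.dst X Y (M.T.η.app X p.1, M.T.η.app Y p.2))) = f p) ∧
      M.Linear₁ B (fun q => B.a (M.T.map (TypeCat.ofHom f) (M.dst X Y q))) ∧
      M.Linear₂ B (fun q => B.a (M.T.map (TypeCat.ofHom f) (M.dst X Y q)))) ∧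
    (∀ g : M.T.obj X × M.T.obj Y → B.A,
      (∀ p : X × Y, g (M.T.η.app X p.1, M.T.η.app Y p.2) = f p) →
      M.Linear₁ B g → M.Linear₂ B g →
      g = fun q => B.a (M.T.map (TypeCat.ofHom f) (M.dst X Y q))) := by
  have hf₁ := M.linear₁_bilinearExtension B f
  have hf₂ := M.linear₂_bilinearExtension B f
  refine ⟨⟨fun p => M.bilinearExtension_η_η B f p.1 p.2, hf₁, hf₂⟩, fun g hg hg₁ hg₂ => ?_⟩
  exact CommMonadData.bilinear_ext hg₁ hg₂ hf₁ hf₂ fun x y =>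
    (hg (x, y)).trans (M.bilinearExtension_η_η B f x y).symm
end

section
/- In a commutative partially additive monad T, partial addition on T1 commutes with the monad multiplication in the following sense: for relations R, S : X × Y → T1 such that R + S is pointwise defined, (μ₁ ∘ T(R)) + (μ₁ ∘ T(S)) = μ₁ ∘ T(R + S); consequently, R ⊑ R' pointwise implies μ₁ ∘ T(R) ⊑ μ₁ ∘ T(R') pointwise, i.e., the extension lifting L_T is monotone on each fibre Rel_{X,Y}. -/
universe u

open CategoryTheory

/-- The zero element of `T X`, obtained from the unique element `t0` of `T ∅`. -/
def CommMonadData.zeroT (M : CommMonadData.{u}) (t0 : M.T.obj (PEmpty : Type u))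
    (X : Type u) : M.T.obj X :=
  M.T.map (TypeCat.ofHom (fun e : PEmpty => (e.elim : X))) t0

/-- The map `δ = ⟨μ₁ ∘ T p₁, μ₁ ∘ T p₂⟩ : T(1+1) → T 1 × T 1`, where `p₁ = [η, 0]` and
`p₂ = [0, η]`. -/
def CommMonadData.deltaT (M : CommMonadData.{u}) (t0 : M.T.obj (PEmpty : Type u))
    (w : M.T.obj (PUnit.{u + 1} ⊕ PUnit.{u + 1})) : M.T.obj (PUnit : Type u) × M.T.obj (PUnit : Type u) :=
  (M.T.μ.app PUnit (M.T.map (TypeCat.ofHom (Sum.elim (fun _ => M.T.η.app PUnit PUnit.unit)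
      (fun _ => M.zeroT t0 PUnit))) w),
   M.T.μ.app PUnit (M.T.map (TypeCat.ofHom (Sum.elim (fun _ => M.zeroT t0 PUnit)
      (fun _ => M.T.η.app PUnit PUnit.unit))) w))

/-- The graph of the partial addition on `T 1` of a partially additive monad:
`a + b = c` iff `(a, b)` is in the image of `δ`, via a witness `w ∈ T(1+1)` with
`T[1,1](w) = c`. -/
def CommMonadData.AddEq (M : CommMonadData.{u}) (t0 : M.T.obj (PEmpty : Type u))
    (a b c : M.T.obj (PUnit : Type u)) : Prop :=
  ∃ w : M.T.obj (PUnit.{u + 1} ⊕ PUnit.{u + 1}),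
    M.deltaT t0 w = (a, b) ∧ M.T.map (TypeCat.ofHom (fun _ => PUnit.unit)) w = c

namespace CommMonadData

lemma nat_mu (M : CommMonadData.{u}) {B C : Type u} (f : B → C)
    (x : M.T.obj (M.T.obj B)) :
    M.T.map (TypeCat.ofHom f) (M.T.μ.app B x) = M.T.μ.app C (M.T.map (TypeCat.ofHom (M.T.map (TypeCat.ofHom f))) x) := by
  have h := types_congr_hom (M.T.μ.naturality (TypeCat.ofHom f)) x
  simp only [CategoryTheory.types_comp_apply, CategoryTheory.Functor.comp_map] at h
  exact h.symm

lemma map_map (M : CommMonadData.{u}) {A B C : Type u} (f : A → B) (g : B → C)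
    (u : M.T.obj A) : M.T.map (TypeCat.ofHom g) (M.T.map (TypeCat.ofHom f) u) = M.T.map (TypeCat.ofHom (fun a => g (f a))) u := by
  have h := types_congr_hom (M.T.toFunctor.map_comp (TypeCat.ofHom f) (TypeCat.ofHom g)) u
  exact h.symm

lemma mu_map_mu (M : CommMonadData.{u}) {A B C : Type u} (W : A → M.T.obj B)
    (f : B → M.T.obj C) (u : M.T.obj A) :
    M.T.μ.app C (M.T.map (TypeCat.ofHom f) (M.T.μ.app B (M.T.map (TypeCat.ofHom W) u)))
      = M.T.μ.app C (M.T.map (TypeCat.ofHom (fun a => M.T.μ.app C (M.T.map (TypeCat.ofHom f) (W a)))) u) := by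
  rw [M.nat_mu f, M.map_map]
  have hassoc := types_congr_hom (M.T.assoc C) (M.T.map (TypeCat.ofHom (fun a => M.T.map (TypeCat.ofHom f) (W a))) u)
  simp only [CategoryTheory.types_comp_apply] at hassoc
  calc M.T.μ.app C (M.T.μ.app (M.T.obj C) (M.T.map (TypeCat.ofHom (fun a => M.T.map (TypeCat.ofHom f) (W a))) u))
      = M.T.μ.app C (M.T.map (TypeCat.ofHom (M.T.μ.app C)) (M.T.map (TypeCat.ofHom (fun a => M.T.map (TypeCat.ofHom f) (W a))) u)) := by
        exact hassoc.symm
    _ = _ := by rw [M.map_map]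

lemma main (M : CommMonadData.{u}) (t0 : M.T.obj (PEmpty : Type u))
    (X Y : Type u) (R S RS : X × Y → M.T.obj (PUnit : Type u))
    (h : ∀ p, M.AddEq t0 (R p) (S p) (RS p)) (u : M.T.obj (X × Y)) :
    M.AddEq t0 (M.T.μ.app PUnit (M.T.map (TypeCat.ofHom R) u)) (M.T.μ.app PUnit (M.T.map (TypeCat.ofHom S) u))
      (M.T.μ.app PUnit (M.T.map (TypeCat.ofHom RS) u)) := by
  choose W hW hW2 using h
  have hW1 : ∀ p, M.T.μ.app PUnit (M.T.map (TypeCat.ofHom (Sum.elim (fun _ => M.T.η.app PUnit PUnit.unit)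
      (fun _ => M.zeroT t0 PUnit))) (W p)) = R p := fun p =>
    congrArg Prod.fst (hW p)
  have hWb : ∀ p, M.T.μ.app PUnit (M.T.map (TypeCat.ofHom (Sum.elim (fun _ => M.zeroT t0 PUnit)
      (fun _ => M.T.η.app PUnit PUnit.unit))) (W p)) = S p := fun p =>
    congrArg Prod.snd (hW p)
  refine ⟨M.T.μ.app _ (M.T.map (TypeCat.ofHom W) u), ?_, ?_⟩
  · unfold CommMonadData.deltaT
    refine Prod.ext ?_ ?_
    · show M.T.μ.app PUnit (M.T.map _ (M.T.μ.app _ (M.T.map (TypeCat.ofHom W) u)))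
        = M.T.μ.app PUnit (M.T.map (TypeCat.ofHom R) u)
      rw [M.mu_map_mu]
      exact congrArg (M.T.μ.app PUnit) (congrArg (fun f => M.T.map (TypeCat.ofHom f) u) (funext hW1))
    · show M.T.μ.app PUnit (M.T.map _ (M.T.μ.app _ (M.T.map (TypeCat.ofHom W) u)))
        = M.T.μ.app PUnit (M.T.map (TypeCat.ofHom S) u)
      rw [M.mu_map_mu]
      exact congrArg (M.T.μ.app PUnit) (congrArg (fun f => M.T.map (TypeCat.ofHom f) u) (funext hWb))
  · rw [M.nat_mu, M.map_map]
    have : (fun a => M.T.map (TypeCat.ofHom (fun _ => PUnit.unit)) (W a)) = RS := funext hW2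
    rw [this]

end CommMonadData


/-- in a commutative partially additive monad `T` (`T ∅` a singleton, `δ`
monic), partial addition on `T 1` commutes with the monad multiplication: for relations
`R, S : X × Y → T 1` whose pointwise sum `R + S` is defined, `(μ₁ ∘ T R) + (μ₁ ∘ T S) =
μ₁ ∘ T (R + S)` pointwise; consequently `R ⊑ R'` pointwise implies
`μ₁ ∘ T R ⊑ μ₁ ∘ T R'` pointwise, i.e. the extension lifting is monotone on each fibre. -/
theorem partially_additive_add_commutes_with_mu (M : CommMonadData.{u})
    (t0 : M.T.obj (PEmpty : Type u)) (hsub : Subsingleton (M.T.obj (PEmpty : Type u)))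
    (hmono : Function.Injective (M.deltaT t0)) :
    (∀ (X Y : Type u) (R S RS : X × Y → M.T.obj (PUnit : Type u)),
      (∀ p, M.AddEq t0 (R p) (S p) (RS p)) →
      ∀ u : M.T.obj (X × Y),
        M.AddEq t0 (M.T.μ.app PUnit (M.T.map (TypeCat.ofHom R) u)) (M.T.μ.app PUnit (M.T.map (TypeCat.ofHom S) u))
          (M.T.μ.app PUnit (M.T.map (TypeCat.ofHom RS) u))) ∧
    (∀ (X Y : Type u) (R R' : X × Y → M.T.obj (PUnit : Type u)),
      (∀ p, ∃ s, M.AddEq t0 (R p) s (R' p)) →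
      ∀ u : M.T.obj (X × Y),
        ∃ c, M.AddEq t0 (M.T.μ.app PUnit (M.T.map (TypeCat.ofHom R) u)) c
          (M.T.μ.app PUnit (M.T.map (TypeCat.ofHom R') u))) := by
  refine ⟨fun X Y R S RS h u => M.main t0 X Y R S RS h u, ?_⟩
  intro X Y R R' h u
  choose s hs using h
  exact ⟨M.T.μ.app PUnit (M.T.map (TypeCat.ofHom s) u), M.main t0 X Y R s R' hs u⟩
end
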